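/- arXiv:2301.06355 — 5 statements merged into one kernel-verified Lean document; each statement's English description precedes it below -/
import Mathlib

section
/- Let H be a complex Hilbert space and A, B positive bounded operators on H. Then the following are equivalent: (i) A ≤ B; (ii) ‖PAP‖ ≤ ‖PBP‖ for every orthogonal projection P ∈ B(H) commuting with B − A. -/
open scoped ENNReal Topology
open Filter MeasureTheory

set_option maxHeartbeats 1000000 in
/-- For positive bounded operators `A, B` on a complex Hilbert space, `A ≤ B` iff
`‖PAP‖ ≤ ‖PBP‖` for every orthogonal projection `P` commuting with `B - A`. -/
theorem stmt1 (H : Type) [NormedAddCommGroup H] [InnerProductSpace ℂ H] [CompleteSpace H]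
    (A B : H →L[ℂ] H) (hA : 0 ≤ A) (hB : 0 ≤ B) :
    A ≤ B ↔ ∀ P : H →L[ℂ] H, IsSelfAdjoint P → IsIdempotentElem P → Commute P (B - A) →
      ‖P * A * P‖ ≤ ‖P * B * P‖ := by
  constructor
  · intro hAB P hPsa hPidem _
    have h1 : 0 ≤ P * A * P := by
      simpa [hPsa.star_eq] using star_left_conjugate_nonneg hA P
    have h2 : P * A * P ≤ P * B * P := hPsa.conjugate_le_conjugate hAB
    exact CStarAlgebra.norm_le_norm_of_nonneg_of_le h1 h2
  · intro hyp
    by_contra hAB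
    obtain hsub | hnt := subsingleton_or_nontrivial (H →L[ℂ] H)
    · exact hAB (le_of_eq (Subsingleton.elim A B))
    set T : H →L[ℂ] H := B - A with hTdef
    have hAsa : IsSelfAdjoint A := .of_nonneg hA
    have hBsa : IsSelfAdjoint B := .of_nonneg hB
    have hTsa : IsSelfAdjoint T := hBsa.sub hAsa
    have hTnot : ¬ (0 ≤ T) := fun h => hAB (by rwa [hTdef, sub_nonneg] at h)
    obtain ⟨lam, hlam_mem, hlam_neg⟩ : ∃ l ∈ spectrum ℝ T, l < 0 := by
      by_contra hcon
      push_neg at hcon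
      exact hTnot <| (StarOrderedRing.nonneg_iff_spectrum_nonneg (R := ℝ) T hTsa).mpr hcon
    clear hAB hTnot
    set ε : ℝ := -lam / 2 with hεdef
    have hε : 0 < ε := by rw [hεdef]; linarith
    set g : ℝ → ℝ := fun t => max (-ε - t) 0 with hgdef
    have hgc : Continuous g := (continuous_const.sub continuous_id).max continuous_const
    set G : H →L[ℂ] H := cfc g T with hGdef
    have hGsa : IsSelfAdjoint G := cfc_predicate g T
    -- G commutes with T
    have hGT : G * T = T * G := by
      have e1 : cfc (fun t : ℝ => g t * t) T = cfc g T * cfc (fun t : ℝ => t) T :=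
        cfc_mul _ _ T hgc.continuousOn continuousOn_id
      have e2 : cfc (fun t : ℝ => t * g t) T = cfc (fun t : ℝ => t) T * cfc g T :=
        cfc_mul _ _ T continuousOn_id hgc.continuousOn
      rw [cfc_id' ℝ T] at e1 e2
      calc G * T = cfc (fun t : ℝ => g t * t) T := e1.symm
        _ = cfc (fun t : ℝ => t * g t) T := by simp only [mul_comm]
        _ = T * G := e2
    -- the compression G (T + ε) G is nonpositive
    set S : H →L[ℂ] H := T + algebraMap ℝ (H →L[ℂ] H) ε with hSdef
    have hScfc : S = cfc (fun t : ℝ => t + ε) T := by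
      rw [cfc_add T (fun t : ℝ => t) (fun _ => ε) continuousOn_id continuousOn_const,
        cfc_id' ℝ T, cfc_const ε T]
    have hGSG : G * S * G ≤ 0 := by
      have hc1 : ContinuousOn (fun t : ℝ => (t + ε) * g t) (spectrum ℝ T) :=
        ((continuous_id.add continuous_const).mul hgc).continuousOn
      have e1 : cfc (fun t : ℝ => g t * ((t + ε) * g t)) T
          = cfc g T * cfc (fun t : ℝ => (t + ε) * g t) T :=
        cfc_mul _ _ T hgc.continuousOn hc1
      have e2 : cfc (fun t : ℝ => (t + ε) * g t) T
          = cfc (fun t : ℝ => t + ε) T * cfc g T :=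
        cfc_mul _ _ T (continuous_id.add continuous_const).continuousOn hgc.continuousOn
      have e : G * S * G = cfc (fun t : ℝ => g t * ((t + ε) * g t)) T := by
        rw [e1, e2, ← hScfc, hGdef, mul_assoc]
      rw [e]
      apply cfc_nonpos
      intro t _
      rcases le_or_gt (-ε - t) 0 with h | h
      · simp [hgdef, max_eq_right h]
      · have hg' : g t = -ε - t := max_eq_left h.le
        have ht : t + ε < 0 := by linarith
        rw [hg']
        have h2 := mul_nonneg h.le h.le
        nlinarith [h2, ht]
    -- hence re⟪T (G y), G y⟫ + ε ‖G y‖² ≤ 0 for all y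
    have hkey0 : ∀ y : H, RCLike.re (inner ℂ (T (G y)) (G y) : ℂ) + ε * ‖G y‖ ^ 2 ≤ 0 := by
      intro y
      have h1 : 0 ≤ -(G * S * G) := neg_nonneg.mpr hGSG
      have h2 := ((ContinuousLinearMap.nonneg_iff_isPositive _).mp h1).re_inner_nonneg_left y
      have h3 : RCLike.re (inner ℂ ((G * S * G) y) y : ℂ) ≤ 0 := by
        have he : RCLike.re (inner ℂ ((-(G * S * G)) y) y : ℂ)
            = - RCLike.re (inner ℂ ((G * S * G) y) y : ℂ) := by
          simp [ContinuousLinearMap.neg_apply, inner_neg_left]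
        rw [he] at h2; linarith
      have h4 : (inner ℂ ((G * S * G) y) y : ℂ) = inner ℂ (S (G y)) (G y) := by
        have he : (G * S * G) y = G (S (G y)) := rfl
        rw [he]
        nth_rewrite 1 [← hGsa.adjoint_eq]
        rw [ContinuousLinearMap.adjoint_inner_left]
      have h5 : RCLike.re (inner ℂ (S (G y)) (G y) : ℂ)
          = RCLike.re (inner ℂ (T (G y)) (G y) : ℂ) + ε * ‖G y‖ ^ 2 := by
        have halg : algebraMap ℝ (H →L[ℂ] H) ε = (ε : ℂ) • (1 : H →L[ℂ] H) := by
          rw [IsScalarTower.algebraMap_apply ℝ ℂ (H →L[ℂ] H),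
            Algebra.algebraMap_eq_smul_one]
          norm_num
        have hz : S (G y) = T (G y) + (ε : ℂ) • (G y) := by
          rw [hSdef]
          simp [halg]
        rw [hz, inner_add_left, inner_smul_left, map_add]
        simp [inner_self_eq_norm_sq]
        left; rw [← Complex.ofReal_pow, Complex.ofReal_re]
      rw [h4, h5] at h3
      exact h3
    -- the subspace
    set M : Submodule ℂ H := (LinearMap.range (G : H →ₗ[ℂ] H)).topologicalClosure with hMdef
    have hrangeM : ∀ y : H, G y ∈ M := fun y =>
      Submodule.le_topologicalClosure _ (LinearMap.mem_range_self _ y)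
    have hMclosure : (M : Set H) = closure (Set.range G) := by
      rw [hMdef, Submodule.topologicalClosure_coe, LinearMap.coe_range]
      rfl
    have hMle : ∀ x ∈ M, RCLike.re (inner ℂ (T x) x : ℂ) + ε * ‖x‖ ^ 2 ≤ 0 := by
      have hclosed : IsClosed {x : H | RCLike.re (inner ℂ (T x) x : ℂ) + ε * ‖x‖ ^ 2 ≤ 0} := by
        apply isClosed_le _ continuous_const
        apply Continuous.add
        · exact RCLike.continuous_re.comp (continuous_inner.comp
            (T.continuous.prodMk continuous_id))
        · exact continuous_const.mul (continuous_norm.pow 2)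
      intro x hx
      have hx' : x ∈ closure (Set.range G) := by rw [← hMclosure]; exact hx
      have hsub : Set.range G ⊆ {x : H | RCLike.re (inner ℂ (T x) x : ℂ) + ε * ‖x‖ ^ 2 ≤ 0} := by
        rintro _ ⟨y, rfl⟩
        exact hkey0 y
      exact closure_minimal hsub hclosed hx'
    haveI : CompleteSpace M := (Submodule.isClosed_topologicalClosure _).completeSpace_coe
    -- the projection
    set P : H →L[ℂ] H := M.subtypeL ∘L M.orthogonalProjection with hPdef
    have hPsa : IsSelfAdjoint P := isSelfAdjoint_starProjection M
    have hPapply : ∀ x ∈ M, P x = x := fun x hx => Submodule.starProjection_eq_self_iff.mpr hx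
    have hPmem : ∀ y : H, P y ∈ M := fun y => (M.orthogonalProjection y).2
    have hPnorm : ∀ y : H, ‖P y‖ ≤ ‖y‖ := by
      intro y
      have h1 : ‖P y‖ = ‖M.orthogonalProjection y‖ := rfl
      rw [h1]
      calc ‖M.orthogonalProjection y‖ ≤ ‖(M.orthogonalProjection : H →L[ℂ] M)‖ * ‖y‖ :=
            (M.orthogonalProjection).le_opNorm y
        _ ≤ 1 * ‖y‖ := by gcongr; exact Submodule.orthogonalProjection_norm_le M
        _ = ‖y‖ := one_mul _
    have hPidem : IsIdempotentElem P := by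
      refine ContinuousLinearMap.ext fun x => ?_
      rw [ContinuousLinearMap.mul_apply]
      exact hPapply _ (hPmem x)
    -- T maps M into M, so P commutes with T
    have hTM : ∀ x ∈ M, T x ∈ M := by
      intro x hx
      have hx' : x ∈ closure (Set.range G) := by rw [← hMclosure]; exact hx
      have h2 : T x ∈ closure (Set.range G) := by
        apply map_mem_closure T.continuous hx'
        rintro _ ⟨y, rfl⟩
        refine ⟨T y, ?_⟩
        have he : G (T y) = (G * T) y := rfl
        rw [he, hGT]
        rfl
      rw [← hMclosure] at h2
      exact h2
    have hPTP : P * T * P = T * P := by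
      refine ContinuousLinearMap.ext fun x => ?_
      simp only [ContinuousLinearMap.mul_apply]
      exact hPapply _ (hTM _ (hPmem x))
    have hPT : Commute P T := by
      have hstar1 : star (T * P) = P * T := by
        rw [star_mul, hPsa.star_eq, hTsa.star_eq]
      have hstar2 : star (P * T * P) = P * (T * P) := by
        rw [star_mul, star_mul, hPsa.star_eq, hTsa.star_eq]
      show P * T = T * P
      calc P * T = star (T * P) := hstar1.symm
        _ = star (P * T * P) := by rw [hPTP]
        _ = P * (T * P) := hstar2
        _ = P * T * P := (mul_assoc _ _ _).symm
        _ = T * P := hPTP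
    have hnorm : ‖P * A * P‖ ≤ ‖P * B * P‖ := hyp P hPsa hPidem hPT
    set N : ℝ := ‖P * B * P‖ with hNdef
    -- key estimate on M
    have hkeyM : ∀ x ∈ M, RCLike.re (inner ℂ (B x) x : ℂ) + ε * ‖x‖ ^ 2 ≤ N * ‖x‖ ^ 2 := by
      intro x hx
      have h1 : RCLike.re (inner ℂ (T x) x : ℂ)
          = RCLike.re (inner ℂ (B x) x : ℂ) - RCLike.re (inner ℂ (A x) x : ℂ) := by
        rw [hTdef]
        simp [inner_sub_left, ContinuousLinearMap.sub_apply]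
      have h2 : RCLike.re (inner ℂ (B x) x : ℂ) + ε * ‖x‖ ^ 2
          ≤ RCLike.re (inner ℂ (A x) x : ℂ) := by
        have := hMle x hx
        rw [h1] at this
        linarith
      have h3 : (inner ℂ ((P * A * P) x) x : ℂ) = inner ℂ (A x) x := by
        have hPx : (P * A * P) x = P (A x) := by
          simp only [ContinuousLinearMap.mul_apply, hPapply x hx]
        rw [hPx]
        nth_rewrite 1 [← hPsa.adjoint_eq]
        rw [ContinuousLinearMap.adjoint_inner_left, hPapply x hx]
      have h4 : RCLike.re (inner ℂ (A x) x : ℂ) ≤ ‖P * A * P‖ * ‖x‖ ^ 2 := by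
        rw [← h3]
        calc RCLike.re (inner ℂ ((P * A * P) x) x : ℂ) ≤ ‖(inner ℂ ((P * A * P) x) x : ℂ)‖ :=
              RCLike.re_le_norm _
          _ ≤ ‖(P * A * P) x‖ * ‖x‖ := norm_inner_le_norm _ _
          _ ≤ (‖P * A * P‖ * ‖x‖) * ‖x‖ := by
              gcongr
              exact (P * A * P).le_opNorm x
          _ = ‖P * A * P‖ * ‖x‖ ^ 2 := by ring
      have h5 : ‖P * A * P‖ * ‖x‖ ^ 2 ≤ N * ‖x‖ ^ 2 := by gcongr
      linarith
    -- G ≠ 0, giving a unit vector in M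
    have hGne : G ≠ 0 := by
      intro h0
      have hmem : ε ∈ spectrum ℝ G := by
        rw [hGdef, cfc_map_spectrum g T hTsa hgc.continuousOn]
        refine ⟨lam, hlam_mem, ?_⟩
        have he : -ε - lam = ε := by rw [hεdef]; ring
        rw [hgdef]
        simp only [he]
        exact max_eq_left hε.le
      rw [h0, spectrum.zero_eq] at hmem
      simp only [Set.mem_singleton_iff] at hmem
      exact hε.ne' hmem
    obtain ⟨y₀, hy₀⟩ : ∃ y, G y ≠ 0 := by
      by_contra h
      push_neg at h
      exact hGne (ContinuousLinearMap.ext fun y => by simp [h y])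
    set x₀ : H := ((‖G y₀‖ : ℂ))⁻¹ • G y₀ with hx₀def
    have hx₀M : x₀ ∈ M := M.smul_mem _ (hrangeM y₀)
    have hx₀norm : ‖x₀‖ = 1 := by
      rw [hx₀def, norm_smul]
      simp [norm_ne_zero_iff.mpr hy₀]
    have hεN : ε ≤ N := by
      have h1 := hkeyM x₀ hx₀M
      rw [hx₀norm] at h1
      simp only [one_pow, mul_one] at h1
      have h2 : 0 ≤ RCLike.re (inner ℂ (B x₀) x₀ : ℂ) :=
        ((ContinuousLinearMap.nonneg_iff_isPositive _).mp hB).re_inner_nonneg_left x₀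
      linarith
    have hN : 0 < N := lt_of_lt_of_le hε hεN
    -- the operator R = PBP
    set R : H →L[ℂ] H := P * B * P with hRdef
    have hRpos : 0 ≤ R := by
      rw [hRdef]
      simpa [hPsa.star_eq] using star_left_conjugate_nonneg hB P
    have hRinner : ∀ y : H, RCLike.re (inner ℂ (R y) y : ℂ) ≤ (N - ε) * ‖y‖ ^ 2 := by
      intro y
      have h1 : (inner ℂ (R y) y : ℂ) = inner ℂ (B (P y)) (P y) := by
        have he : R y = P (B (P y)) := rfl
        rw [he]
        nth_rewrite 1 [← hPsa.adjoint_eq]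
        rw [ContinuousLinearMap.adjoint_inner_left]
      have h2 := hkeyM (P y) (hPmem y)
      have h3 : ‖P y‖ ^ 2 ≤ ‖y‖ ^ 2 := by
        gcongr
        exact hPnorm y
      rw [h1]
      nlinarith [hε.le]
    -- square root trick
    set Q : H →L[ℂ] H := CFC.sqrt R with hQdef
    have hQmul : Q * Q = R := CFC.sqrt_mul_sqrt_self R hRpos
    have hQsa : IsSelfAdjoint Q := IsSelfAdjoint.of_nonneg (CFC.sqrt_nonneg R)
    have hQnormsq : ‖Q‖ ^ 2 = N := by
      have he : ‖star Q * Q‖ = ‖Q‖ * ‖Q‖ := CStarRing.norm_star_mul_self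
      rw [hQsa.star_eq, hQmul] at he
      rw [sq, ← he, hNdef]
    have hQapply : ∀ y : H, ‖Q y‖ ^ 2 = RCLike.re (inner ℂ (R y) y : ℂ) := by
      intro y
      have h1 : (inner ℂ (R y) y : ℂ) = inner ℂ (Q y) (Q y) := by
        have h2 : R y = Q (Q y) := by rw [← hQmul]; rfl
        rw [h2]
        nth_rewrite 1 [← hQsa.adjoint_eq]
        rw [ContinuousLinearMap.adjoint_inner_left]
      rw [h1, ← inner_self_eq_norm_sq (𝕜 := ℂ)]
    have hQbound : ∀ y : H, ‖Q y‖ ≤ Real.sqrt (N - ε) * ‖y‖ := by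
      intro y
      have h1 : ‖Q y‖ ^ 2 ≤ (N - ε) * ‖y‖ ^ 2 := by
        rw [hQapply y]; exact hRinner y
      have h2 : (N - ε) * ‖y‖ ^ 2 = (Real.sqrt (N - ε) * ‖y‖) ^ 2 := by
        rw [mul_pow, Real.sq_sqrt (by linarith : (0:ℝ) ≤ N - ε)]
      rw [h2] at h1
      calc ‖Q y‖ = Real.sqrt (‖Q y‖ ^ 2) := (Real.sqrt_sq (norm_nonneg _)).symm
        _ ≤ Real.sqrt ((Real.sqrt (N - ε) * ‖y‖) ^ 2) := Real.sqrt_le_sqrt h1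
        _ = Real.sqrt (N - ε) * ‖y‖ := Real.sqrt_sq (by positivity)
    have hRnorm : N ≤ ‖Q‖ * Real.sqrt (N - ε) := by
      rw [hNdef, hRdef]
      apply ContinuousLinearMap.opNorm_le_bound _ (by positivity)
      intro y
      calc ‖R y‖ = ‖Q (Q y)‖ := by rw [← hQmul]; rfl
        _ ≤ ‖Q‖ * ‖Q y‖ := Q.le_opNorm _
        _ ≤ ‖Q‖ * (Real.sqrt (N - ε) * ‖y‖) :=
            mul_le_mul_of_nonneg_left (hQbound y) (norm_nonneg Q)
        _ = ‖Q‖ * Real.sqrt (N - ε) * ‖y‖ := by ring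
    have hQn : ‖Q‖ = Real.sqrt N := by
      rw [← hQnormsq, Real.sqrt_sq (norm_nonneg _)]
    rw [hQn] at hRnorm
    nlinarith [Real.sq_sqrt hN.le, Real.sq_sqrt (show (0:ℝ) ≤ N - ε by linarith),
      Real.sqrt_nonneg N, Real.sqrt_nonneg (N - ε), hε, hN,
      mul_le_mul hRnorm hRnorm hN.le (by positivity)]
end

section
/- Let H be a complex Hilbert space, let P ∈ B(H) be a nonzero orthogonal projection, let X be a positive bounded operator on H, and for each s > 0 let X_s be a positive bounded operator such that ‖X_s − X‖ → 0 as s → ∞. Then lim_{s→∞} ( ‖X_s + sP‖ − s ) = ‖PXP‖. -/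
set_option linter.unusedSectionVars false
set_option maxHeartbeats 1000000

open Filter ContinuousLinearMap

variable {H : Type} [NormedAddCommGroup H] [InnerProductSpace ℂ H] [CompleteSpace H]

local notation "⟪" x ", " y "⟫" => @inner ℂ _ _ x y

-- Lemma 1
lemma re_inner_le_norm' (T : H →L[ℂ] H) (x : H) :
    RCLike.re ⟪T x, x⟫ ≤ ‖T‖ * ‖x‖ ^ 2 := by
  calc RCLike.re ⟪T x, x⟫ ≤ ‖⟪T x, x⟫‖ := RCLike.re_le_norm _
    _ ≤ ‖T x‖ * ‖x‖ := norm_inner_le_norm _ _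
    _ ≤ (‖T‖ * ‖x‖) * ‖x‖ := by
        have := T.le_opNorm x; nlinarith [norm_nonneg x]
    _ = ‖T‖ * ‖x‖ ^ 2 := by ring

-- symmetry of re-form
lemma re_inner_symm {T : H →L[ℂ] H} (hT : IsSelfAdjoint T) (x y : H) :
    RCLike.re ⟪T x, y⟫ = RCLike.re ⟪T y, x⟫ := by
  have h := hT.isSymmetric y x
  simp only [ContinuousLinearMap.coe_coe] at h
  rw [h]; exact (inner_re_symm _ _).symm

-- Lemma 2: key upper bound
lemma norm_le_of_forall_re_inner_le {T : H →L[ℂ] H} (hT : IsSelfAdjoint T) {c : ℝ}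
    (hc : 0 ≤ c) (h : ∀ x : H, |RCLike.re ⟪T x, x⟫| ≤ c * ‖x‖ ^ 2) : ‖T‖ ≤ c := by
  have key : ∀ x y : H, RCLike.re ⟪T x, y⟫ ≤ c / 2 * (‖x‖ ^ 2 + ‖y‖ ^ 2) := by
    intro x y
    have e1 : RCLike.re ⟪T (x + y), x + y⟫ - RCLike.re ⟪T (x - y), x - y⟫
        = 4 * RCLike.re ⟪T x, y⟫ := by
      have hsymm := re_inner_symm hT x y
      simp only [map_add, map_sub, inner_add_left, inner_add_right, inner_sub_left,
        inner_sub_right]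
      linarith
    have h1 := (abs_le.mp (h (x + y))).2
    have h2 := (abs_le.mp (h (x - y))).1
    have par : ‖x + y‖ * ‖x + y‖ + ‖x - y‖ * ‖x - y‖ = 2 * (‖x‖ * ‖x‖ + ‖y‖ * ‖y‖) :=
      by simpa only [sq] using parallelogram_law_with_norm ℂ x y
    nlinarith [sq_nonneg (‖x + y‖), sq_nonneg (‖x - y‖), sq_abs (‖x+y‖)]
  have key2 : ∀ x y : H, RCLike.re ⟪T x, y⟫ ≤ c * (‖x‖ * ‖y‖) := by
    intro x y
    rcases eq_or_ne x 0 with rfl | hx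
    · simp
    rcases eq_or_ne y 0 with rfl | hy
    · simp
    have hxn : (0:ℝ) < ‖x‖ := norm_pos_iff.mpr hx
    have hyn : (0:ℝ) < ‖y‖ := norm_pos_iff.mpr hy
    set t : ℝ := Real.sqrt (‖y‖ / ‖x‖) with ht
    have htpos : 0 < t := Real.sqrt_pos.mpr (by positivity)
    have htsq : t ^ 2 = ‖y‖ / ‖x‖ := Real.sq_sqrt (by positivity)
    set z : ℂ := (t : ℂ) with hz
    have hzne : z ≠ 0 := by
      simp [hz, Complex.ofReal_eq_zero, htpos.ne']
    have := key (z • x) (z⁻¹ • y)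
    rw [map_smul, inner_smul_left, inner_smul_right] at this
    have hconj : (starRingEnd ℂ) z = z := by
      simp [hz, Complex.conj_ofReal]
    rw [hconj, ← mul_assoc, mul_inv_cancel₀ hzne, one_mul] at this
    rw [norm_smul, norm_smul] at this
    have hnt : ‖z‖ = t := by simp [hz, Complex.norm_real, abs_of_pos htpos]
    have hnt' : ‖z⁻¹‖ = t⁻¹ := by rw [norm_inv, hnt]
    rw [hnt, hnt'] at this
    have e2 : (t * ‖x‖) ^ 2 = ‖y‖ * ‖x‖ := by
      rw [mul_pow, htsq]; field_simp
    have e3 : (t⁻¹ * ‖y‖) ^ 2 = ‖x‖ * ‖y‖ := by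
      rw [mul_pow, inv_pow, htsq]; field_simp
    rw [e2, e3] at this
    calc RCLike.re ⟪T x, y⟫ ≤ c / 2 * (‖y‖ * ‖x‖ + ‖x‖ * ‖y‖) := this
      _ = c * (‖x‖ * ‖y‖) := by ring
  refine T.opNorm_le_bound hc fun x => ?_
  rcases eq_or_ne (T x) 0 with h0 | h0
  · rw [h0, norm_zero]; positivity
  have := key2 x (T x)
  rw [inner_self_eq_norm_sq] at this
  have hTx : (0:ℝ) < ‖T x‖ := norm_pos_iff.mpr h0
  nlinarith

open Filter ContinuousLinearMap

variable {H : Type} [NormedAddCommGroup H] [InnerProductSpace ℂ H] [CompleteSpace H]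


lemma exists_sqrt' {T : H →L[ℂ] H} (hT : 0 ≤ T) :
    ∃ S : H →L[ℂ] H, IsSelfAdjoint S ∧ S * S = T := by
  refine ⟨CFC.sqrt T, IsSelfAdjoint.of_nonneg (CFC.sqrt_nonneg T), ?_⟩
  rw [← pow_two, CFC.sq_sqrt T hT]

lemma cauchy_schwarz_re' {A : H →L[ℂ] H} (hA : 0 ≤ A) (u w : H) :
    RCLike.re ⟪A u, w⟫ ≤ Real.sqrt (RCLike.re ⟪A u, u⟫) * Real.sqrt (RCLike.re ⟪A w, w⟫) := by
  obtain ⟨S, hS, hSS⟩ := exists_sqrt' hA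
  have hsym := hS.isSymmetric
  have happ : ∀ v : H, A v = S (S v) := by
    intro v; rw [← hSS]; rfl
  have h1 : ∀ v : H, RCLike.re ⟪A v, v⟫ = ‖S v‖ ^ 2 := by
    intro v
    rw [happ]
    have := hsym (S v) v
    simp only [ContinuousLinearMap.coe_coe] at this
    rw [this, inner_self_eq_norm_sq]
  have h2 : ⟪A u, w⟫ = ⟪S u, S w⟫ := by
    rw [happ]
    have := hsym (S u) w
    simp only [ContinuousLinearMap.coe_coe] at this
    rw [this]
  rw [h2, h1, h1, Real.sqrt_sq (norm_nonneg _), Real.sqrt_sq (norm_nonneg _)]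
  calc RCLike.re ⟪S u, S w⟫ ≤ ‖⟪S u, S w⟫‖ := RCLike.re_le_norm _
    _ ≤ ‖S u‖ * ‖S w‖ := norm_inner_le_norm _ _
section Part3

variable {H : Type} [NormedAddCommGroup H] [InnerProductSpace ℂ H] [CompleteSpace H]

variable {P : H →L[ℂ] H} (hP : IsSelfAdjoint P) (hP2 : IsIdempotentElem P)

include hP hP2 in
lemma inner_P_self (x : H) : ⟪P x, x⟫ = ⟪P x, P x⟫ := by
  have h1 : P (P x) = P x := by
    conv_rhs => rw [← hP2]
    rfl
  have h2 := hP.isSymmetric (P x) x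
  simp only [ContinuousLinearMap.coe_coe] at h2
  rw [← h2, h1]

include hP hP2 in
lemma re_inner_P_self (x : H) : RCLike.re ⟪P x, x⟫ = ‖P x‖ ^ 2 := by
  rw [inner_P_self hP hP2, inner_self_eq_norm_sq]

include hP hP2 in
lemma norm_P_le_one (hPne : P ≠ 0) : ‖P‖ = 1 := by
  have h : ‖P‖ * ‖P‖ = ‖P‖ := by
    conv_rhs => rw [← hP2]
    rw [show (P * P : H →L[ℂ] H) = star P * P by rw [hP.star_eq]]
    rw [CStarRing.norm_star_mul_self]
  have hpos : (0:ℝ) < ‖P‖ := norm_pos_iff.mpr hPne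
  nlinarith

include hP hP2 in
lemma norm_P_apply_le (hPne : P ≠ 0) (x : H) : ‖P x‖ ≤ ‖x‖ := by
  have := P.le_opNorm x
  rw [norm_P_le_one hP hP2 hPne, one_mul] at this
  exact this

-- lower bound
include hP hP2 in
lemma lower_bound (hPne : P ≠ 0) {A : H →L[ℂ] H} (hA : 0 ≤ A) {s : ℝ} (hs : 0 < s) :
    ‖P * A * P‖ + s ≤ ‖A + s • P‖ := by
  set T : H →L[ℂ] H := A + s • P with hT
  have hApos : A.IsPositive := (ContinuousLinearMap.nonneg_iff_isPositive A).mp hA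
  have hAsa : IsSelfAdjoint A := hApos.isSelfAdjoint
  -- re ⟪T x, x⟫ = re ⟪A x, x⟫ + s * ‖P x‖ ^ 2
  have hTre : ∀ x : H, RCLike.re ⟪T x, x⟫ = RCLike.re ⟪A x, x⟫ + s * ‖P x‖ ^ 2 := by
    intro x
    simp only [hT, ContinuousLinearMap.add_apply, ContinuousLinearMap.smul_apply,
      inner_add_left, map_add, RCLike.real_smul_eq_coe_smul (K := ℂ), inner_smul_left,
      RCLike.conj_ofReal, RCLike.re_ofReal_mul]
    rw [re_inner_P_self hP hP2]
  -- ‖T‖ ≥ s : use a unit vector in range of P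
  obtain ⟨v, hv⟩ : ∃ v : H, P v ≠ 0 := by
    by_contra h
    push_neg at h
    exact hPne (ContinuousLinearMap.ext fun v => h v)
  set u : H := ‖P v‖⁻¹ • P v with hu
  have hunorm : ‖u‖ = 1 := norm_smul_inv_norm hv
  have hPu : P u = u := by
    rw [hu, map_smul_of_tower]
    congr 1
    conv_rhs => rw [← hP2]
    rfl
  have hsleT : s ≤ ‖T‖ := by
    have h1 := hTre u
    have h2 : RCLike.re ⟪A u, u⟫ ≥ 0 := hApos.re_inner_nonneg_left u
    have h3 := re_inner_le_norm' T u
    rw [hunorm] at h3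
    rw [hPu, hunorm] at h1
    nlinarith
  -- ‖P A P‖ ≤ ‖T‖ - s
  have hPAPsa : IsSelfAdjoint (P * A * P) := by
    rw [IsSelfAdjoint, star_mul, star_mul, hP.star_eq, hAsa.star_eq, mul_assoc]
  have key : ‖P * A * P‖ ≤ ‖T‖ - s := by
    refine norm_le_of_forall_re_inner_le hPAPsa (by linarith) fun x => ?_
    have happ : (P * A * P) x = P (A (P x)) := rfl
    have hmove : ⟪(P * A * P) x, x⟫ = ⟪A (P x), P x⟫ := by
      rw [happ]
      have := hP.isSymmetric (A (P x)) x
      simp only [ContinuousLinearMap.coe_coe] at this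
      exact this
    have hnn : 0 ≤ RCLike.re ⟪A (P x), P x⟫ := hApos.re_inner_nonneg_left _
    have hb := re_inner_le_norm' T (P x)
    rw [hTre (P x)] at hb
    have hPPx : P (P x) = P x := by
      conv_rhs => rw [← hP2]
      rfl
    rw [hPPx] at hb
    have hPxle : ‖P x‖ ≤ ‖x‖ := norm_P_apply_le hP hP2 hPne x
    rw [hmove, abs_of_nonneg hnn]
    have h4 : ‖P x‖ ^ 2 ≤ ‖x‖ ^ 2 := by nlinarith [norm_nonneg (P x), norm_nonneg x]
    nlinarith [norm_nonneg (P x)]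
  linarith

-- upper bound
include hP hP2 in
lemma upper_bound (hPne : P ≠ 0) {A : H →L[ℂ] H} (hA : 0 ≤ A) {s : ℝ}
    (hds : ‖A‖ + 1 ≤ s) :
    ‖A + s • P‖ ≤ s + ‖P * A * P‖ + ‖P * A * P‖ * ‖A‖ / (s - ‖A‖) := by
  set M : ℝ := ‖P * A * P‖ with hM
  set d : ℝ := s - ‖A‖ with hd
  have hdpos : (0:ℝ) < d := by
    have := norm_nonneg A; simp only [hd]; linarith
  have hs : (0:ℝ) < s := by have := norm_nonneg A; linarith
  have hMnn : 0 ≤ M := norm_nonneg _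
  have hAnn : 0 ≤ ‖A‖ := norm_nonneg _
  have hApos : A.IsPositive := (ContinuousLinearMap.nonneg_iff_isPositive A).mp hA
  have hAsa : IsSelfAdjoint A := hApos.isSelfAdjoint
  set T : H →L[ℂ] H := A + s • P with hT
  have hsP : IsSelfAdjoint (s • P) := by
    rw [IsSelfAdjoint, star_smul, star_trivial, hP.star_eq]
  have hTsa : IsSelfAdjoint T := hAsa.add hsP
  set c : ℝ := s + M + M * ‖A‖ / d with hc
  have hcnn : 0 ≤ c := by positivity
  have hTpos : ∀ x : H, 0 ≤ RCLike.re ⟪T x, x⟫ := by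
    intro x
    have h1 : RCLike.re ⟪T x, x⟫ = RCLike.re ⟪A x, x⟫ + s * ‖P x‖ ^ 2 := by
      simp only [hT, ContinuousLinearMap.add_apply, ContinuousLinearMap.smul_apply,
        inner_add_left, map_add, RCLike.real_smul_eq_coe_smul (K := ℂ), inner_smul_left,
        RCLike.conj_ofReal, RCLike.re_ofReal_mul]
      rw [re_inner_P_self hP hP2]
    rw [h1]
    have := hApos.re_inner_nonneg_left x
    nlinarith [sq_nonneg ‖P x‖]
  have hbound : ∀ x : H, |RCLike.re ⟪T x, x⟫| ≤ c * ‖x‖ ^ 2 := by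
    intro x
    rw [abs_of_nonneg (hTpos x)]
    set u : H := P x with hu
    set w : H := x - P x with hw
    have hPu : P u = u := by
      rw [hu]
      show (P * P) x = P x
      rw [hP2]
    have hxuw : x = u + w := by rw [hu, hw]; abel
    have horth : ⟪u, w⟫ = 0 := by
      rw [hu, hw, inner_sub_right]
      rw [inner_P_self hP hP2 x]
      simp
    have hpyth : ‖x‖ ^ 2 = ‖u‖ ^ 2 + ‖w‖ ^ 2 := by
      rw [hxuw, @norm_add_sq ℂ, horth]
      simp
    set a : ℝ := ‖u‖ with ha
    set b : ℝ := ‖w‖ with hb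
    have hann : 0 ≤ a := norm_nonneg _
    have hbnn : 0 ≤ b := norm_nonneg _
    -- decompose re ⟪A x, x⟫
    have hdecomp : RCLike.re ⟪A x, x⟫
        = RCLike.re ⟪A u, u⟫ + 2 * RCLike.re ⟪A u, w⟫ + RCLike.re ⟪A w, w⟫ := by
      conv_lhs => rw [hxuw]
      rw [map_add, inner_add_left, inner_add_right, inner_add_right, map_add, map_add, map_add]
      have := re_inner_symm hAsa w u
      linarith
    -- bounds
    have h1 : RCLike.re ⟪A u, u⟫ ≤ M * a ^ 2 := by
      have hmove : ⟪A u, u⟫ = ⟪(P * A * P) u, u⟫ := by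
        have happ : (P * A * P) u = P (A u) := by
          show P (A (P u)) = P (A u); rw [hPu]
        rw [happ]
        have := hP.isSymmetric (A u) u
        simp only [ContinuousLinearMap.coe_coe] at this
        rw [this, hPu]
      rw [hmove]
      exact re_inner_le_norm' _ u
    have h1' : 0 ≤ RCLike.re ⟪A u, u⟫ := hApos.re_inner_nonneg_left u
    have h2 : RCLike.re ⟪A w, w⟫ ≤ ‖A‖ * b ^ 2 := re_inner_le_norm' A w
    have h2' : 0 ≤ RCLike.re ⟪A w, w⟫ := hApos.re_inner_nonneg_left w
    have h3 : RCLike.re ⟪A u, w⟫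
        ≤ (Real.sqrt M * Real.sqrt ‖A‖ * a) * b := by
      refine (cauchy_schwarz_re' hA u w).trans ?_
      have e1 : Real.sqrt (RCLike.re ⟪A u, u⟫) ≤ Real.sqrt M * a := by
        rw [← Real.sqrt_sq hann, ← Real.sqrt_mul hMnn]
        exact Real.sqrt_le_sqrt h1
      have e2 : Real.sqrt (RCLike.re ⟪A w, w⟫) ≤ Real.sqrt ‖A‖ * b := by
        rw [← Real.sqrt_sq hbnn, ← Real.sqrt_mul hAnn]
        exact Real.sqrt_le_sqrt h2
      have := mul_le_mul e1 e2 (Real.sqrt_nonneg _) (by positivity)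
      nlinarith [Real.sqrt_nonneg (RCLike.re ⟪A u, u⟫), Real.sqrt_nonneg (RCLike.re ⟪A w, w⟫)]
    -- AM-GM
    have hamgm : 2 * ((Real.sqrt M * Real.sqrt ‖A‖ * a) * b)
        ≤ M * ‖A‖ * a ^ 2 / d + d * b ^ 2 := by
      set p : ℝ := Real.sqrt M * Real.sqrt ‖A‖ * a with hp
      have hpsq : p ^ 2 = M * ‖A‖ * a ^ 2 := by
        rw [hp, mul_pow, mul_pow, Real.sq_sqrt hMnn, Real.sq_sqrt hAnn]
      rw [div_add' _ _ _ hdpos.ne', le_div_iff₀ hdpos, ← hpsq]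
      nlinarith [sq_nonneg (p - d * b)]
    -- quadratic form of T
    have hTre : RCLike.re ⟪T x, x⟫ = RCLike.re ⟪A x, x⟫ + s * a ^ 2 := by
      simp only [hT, ContinuousLinearMap.add_apply, ContinuousLinearMap.smul_apply,
        inner_add_left, map_add, RCLike.real_smul_eq_coe_smul (K := ℂ), inner_smul_left,
        RCLike.conj_ofReal, RCLike.re_ofReal_mul]
      rw [re_inner_P_self hP hP2, ha, hu]
    rw [hTre, hdecomp, hpyth, hc]
    have hexp : M * ‖A‖ * a ^ 2 / d = M * ‖A‖ / d * a ^ 2 := by ring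
    have hMAd : 0 ≤ M * ‖A‖ / d := by positivity
    have hdA : d + ‖A‖ = s := by rw [hd]; ring
    have h3' : 2 * RCLike.re ⟪A u, w⟫ ≤ M * ‖A‖ / d * a ^ 2 + d * b ^ 2 := by
      linarith [h3, hamgm, hexp]
    have e4 : s * b ^ 2 = d * b ^ 2 + ‖A‖ * b ^ 2 := by rw [← hdA]; ring
    have e5 : (s + M + M * ‖A‖ / d) * (a ^ 2 + b ^ 2)
        = s * a ^ 2 + M * a ^ 2 + M * ‖A‖ / d * a ^ 2 + s * b ^ 2 + M * b ^ 2
          + M * ‖A‖ / d * b ^ 2 := by ring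
    have h6 : 0 ≤ M * b ^ 2 := mul_nonneg hMnn (sq_nonneg b)
    have h7 : 0 ≤ M * ‖A‖ / d * b ^ 2 := mul_nonneg hMAd (sq_nonneg b)
    linarith
  exact norm_le_of_forall_re_inner_le hTsa hcnn hbound

end Part3
open scoped ENNReal Topology
open Filter MeasureTheory

/-- If `P` is a nonzero orthogonal projection, `X ≥ 0`, and `X_s ≥ 0` (for `s > 0`) satisfy
`‖X_s - X‖ → 0` as `s → ∞`, then `‖X_s + sP‖ - s → ‖PXP‖` as `s → ∞`. -/
theorem stmt4 (H : Type) [NormedAddCommGroup H] [InnerProductSpace ℂ H] [CompleteSpace H]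
    (P : H →L[ℂ] H) (hP : IsSelfAdjoint P) (hP2 : IsIdempotentElem P) (hPne : P ≠ 0)
    (X : H →L[ℂ] H) (hX : 0 ≤ X)
    (Xs : ℝ → H →L[ℂ] H) (hXs : ∀ s : ℝ, 0 < s → 0 ≤ Xs s)
    (hconv : Tendsto (fun s : ℝ => ‖Xs s - X‖) atTop (𝓝 0)) :
    Tendsto (fun s : ℝ => ‖Xs s + s • P‖ - s) atTop (𝓝 ‖P * X * P‖) := by
  have hXsconv : Tendsto Xs atTop (𝓝 X) := by
    rw [tendsto_iff_norm_sub_tendsto_zero]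
    exact hconv
  have hM : Tendsto (fun s => ‖P * Xs s * P‖) atTop (𝓝 ‖P * X * P‖) :=
    ((tendsto_const_nhds.mul hXsconv).mul tendsto_const_nhds).norm
  have hnA : Tendsto (fun s => ‖Xs s‖) atTop (𝓝 ‖X‖) := hXsconv.norm
  have hd : Tendsto (fun s => s - ‖Xs s‖) atTop atTop := by
    have h1 : Tendsto (fun s : ℝ => -‖Xs s‖ + s) atTop atTop :=
      hnA.neg.add_atTop tendsto_id
    simpa [sub_eq_neg_add] using h1
  have herr : Tendsto (fun s => ‖P * Xs s * P‖ * ‖Xs s‖ / (s - ‖Xs s‖)) atTop (𝓝 0) :=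
    Tendsto.div_atTop (hM.mul hnA) hd
  have hupper : Tendsto (fun s => ‖P * Xs s * P‖ + ‖P * Xs s * P‖ * ‖Xs s‖ / (s - ‖Xs s‖))
      atTop (𝓝 ‖P * X * P‖) := by
    simpa using hM.add herr
  have hev1 : ∀ᶠ s : ℝ in atTop, ‖P * Xs s * P‖ ≤ ‖Xs s + s • P‖ - s := by
    filter_upwards [eventually_gt_atTop (0:ℝ)] with s hs
    have := lower_bound hP hP2 hPne (hXs s hs) hs
    linarith
  have hev2 : ∀ᶠ s : ℝ in atTop,
      ‖Xs s + s • P‖ - s ≤ ‖P * Xs s * P‖ + ‖P * Xs s * P‖ * ‖Xs s‖ / (s - ‖Xs s‖) := by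
    filter_upwards [eventually_gt_atTop (0:ℝ), hd.eventually_ge_atTop 1] with s hs hds
    have hds' : ‖Xs s‖ + 1 ≤ s := by linarith
    have := upper_bound hP hP2 hPne (hXs s hs) hds'
    linarith
  exact tendsto_of_tendsto_of_tendsto_of_le_of_le' hM hupper hev1 hev2
end

section
/- Let f : (0,∞) → (0,∞) be an operator monotone function with Löwner measure m. If f is symmetric (f(x) = x·f(1/x) for all x > 0), then ∫_{[0,∞]} t dm(t) = ∫_{[0,∞]} t⁻¹ dm(t), where both integrals take values in [0,∞] with the conventions that the first integrand equals ∞ at t = ∞ and the second equals ∞ at t = 0 and 0 at t = ∞. -/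
open scoped ENNReal Topology
open Filter MeasureTheory

/-- A function `f : (0,∞) → (0,∞)` (encoded as a function `ℝ → ℝ`) is operator monotone if for
every complex Hilbert space and all positive invertible bounded operators `A ≤ B` one has
`f(A) ≤ f(B)`, where `f(A)` is given by the continuous functional calculus. -/
def IsOperatorMonotone (f : ℝ → ℝ) : Prop :=
  ∀ (H : Type) [NormedAddCommGroup H] [InnerProductSpace ℂ H] [CompleteSpace H]
    (A B : H →L[ℂ] H), 0 ≤ A → IsUnit A → 0 ≤ B → IsUnit B → A ≤ B → cfc f A ≤ cfc f B

/-- The Löwner kernel `x(1+t)/(x+t)` on `[0,∞]`, read as `x` at `t = ∞`. -/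
noncomputable def loewnerKernel (x : ℝ) (t : ℝ≥0∞) : ℝ :=
  if t = ∞ then x else x * (1 + t.toReal) / (x + t.toReal)

lemma lk_nonneg {x : ℝ} (hx : 0 < x) (t : ℝ≥0∞) : 0 ≤ loewnerKernel x t := by
  unfold loewnerKernel
  split
  · exact hx.le
  · have hs : 0 ≤ t.toReal := ENNReal.toReal_nonneg
    positivity

lemma lk_meas (x : ℝ) : Measurable (loewnerKernel x) := by
  have h : Measurable fun t : ℝ≥0∞ => x * (1 + t.toReal) / (x + t.toReal) :=
    (measurable_const.mul (measurable_const.add ENNReal.measurable_toReal)).div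
      (measurable_const.add ENNReal.measurable_toReal)
  exact Measurable.ite measurableSet_eq measurable_const h

lemma lk_le {x : ℝ} (hx : 0 < x) (t : ℝ≥0∞) : loewnerKernel x t ≤ max 1 x := by
  unfold loewnerKernel
  split
  · exact le_max_right 1 x
  · have hs : 0 ≤ t.toReal := ENNReal.toReal_nonneg
    rw [div_le_iff₀ (by positivity)]
    have h1 : (1:ℝ) ≤ max 1 x := le_max_left 1 x
    have h2 : x ≤ max 1 x := le_max_right 1 x
    nlinarith

lemma lk_integrable {x : ℝ} (hx : 0 < x) (m : Measure ℝ≥0∞) [IsFiniteMeasure m] :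
    Integrable (loewnerKernel x) m := by
  refine ⟨(lk_meas x).aestronglyMeasurable, HasFiniteIntegral.of_bounded (C := max 1 x)
    (ae_of_all _ fun t => ?_)⟩
  rw [Real.norm_eq_abs, abs_of_nonneg (lk_nonneg hx t)]
  exact lk_le hx t

lemma real_tendstoA (s : ℝ) (hs : 0 ≤ s) :
    Tendsto (fun n : ℕ => ((n:ℝ)+1)*(1+s)/(((n:ℝ)+1)+s)) atTop (𝓝 (1+s)) := by
  have hden : Tendsto (fun n : ℕ => ((n:ℝ)+1)+s) atTop atTop :=
    tendsto_atTop_add_const_right _ s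
      (tendsto_atTop_add_const_right _ 1 tendsto_natCast_atTop_atTop)
  have h0 : Tendsto (fun n : ℕ => s/(((n:ℝ)+1)+s)) atTop (𝓝 0) :=
    Tendsto.div_atTop tendsto_const_nhds hden
  have h1 : Tendsto (fun n : ℕ => (1+s)*(1 - s/(((n:ℝ)+1)+s))) atTop (𝓝 ((1+s)*(1-0))) :=
    tendsto_const_nhds.mul (tendsto_const_nhds.sub h0)
  rw [sub_zero, mul_one] at h1
  refine h1.congr fun n => ?_
  have hd : ((n:ℝ)+1)+s ≠ 0 := by positivity
  field_simp
  ring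

lemma real_tendstoB (s : ℝ) (hs : 0 < s) :
    Tendsto (fun n : ℕ => (1+s)/((((n:ℝ)+1))⁻¹+s)) atTop (𝓝 ((1+s)/s)) := by
  have h0' : Tendsto (fun n : ℕ => (((n:ℝ)+1))⁻¹) atTop (𝓝 (0:ℝ)) :=
    tendsto_inv_atTop_zero.comp
      (tendsto_atTop_add_const_right _ 1 tendsto_natCast_atTop_atTop)
  have h0 : Tendsto (fun n : ℕ => (((n:ℝ)+1))⁻¹ + s) atTop (𝓝 (0+s)) :=
    h0'.add tendsto_const_nhds
  rw [zero_add] at h0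
  exact tendsto_const_nhds.div h0 hs.ne'

lemma tendsto_ofReal_top :
    Tendsto (fun n : ℕ => ENNReal.ofReal ((n:ℝ)+1)) atTop (𝓝 (∞ : ℝ≥0∞)) := by
  refine tendsto_nhds_top_mono ENNReal.tendsto_nat_nhds_top (Eventually.of_forall fun n => ?_)
  calc ((n:ℝ≥0∞)) = ENNReal.ofReal (n:ℝ) := (ENNReal.ofReal_natCast n).symm
    _ ≤ ENNReal.ofReal ((n:ℝ)+1) := ENNReal.ofReal_le_ofReal (by linarith)

/-- value of `x * loewnerKernel x⁻¹ t` at finite `t` -/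
lemma lk_inv_eq {x : ℝ} (hx : 0 < x) {t : ℝ≥0∞} (ht : t ≠ ∞) :
    x * loewnerKernel x⁻¹ t = (1 + t.toReal) / (x⁻¹ + t.toReal) := by
  unfold loewnerKernel
  rw [if_neg ht]
  have hx' : x ≠ 0 := hx.ne'
  field_simp

set_option maxHeartbeats 1000000 in
/-- If the operator monotone function `f` with Löwner measure `m` is symmetric, then
`∫ t dm(t) = ∫ t⁻¹ dm(t)` (in `[0,∞]`, with the `ℝ≥0∞` conventions `∞⁻¹ = 0`, `0⁻¹ = ∞`). -/
theorem stmt6 (f : ℝ → ℝ) (hf_pos : ∀ x : ℝ, 0 < x → 0 < f x)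
    (hf_mono : IsOperatorMonotone f)
    (m : Measure ℝ≥0∞) [IsFiniteMeasure m]
    (hrep : ∀ x : ℝ, 0 < x → f x = ∫ t, loewnerKernel x t ∂m)
    (hf_symm : ∀ x : ℝ, 0 < x → f x = x * f x⁻¹) :
    ∫⁻ t, t ∂m = ∫⁻ t, t⁻¹ ∂m := by
  classical
  set a : ℕ → ℝ≥0∞ → ℝ≥0∞ :=
    fun n t => ENNReal.ofReal (loewnerKernel ((n:ℝ)+1) t) with ha
  set b : ℕ → ℝ≥0∞ → ℝ≥0∞ :=
    fun n t => ENNReal.ofReal (((n:ℝ)+1) * loewnerKernel ((n:ℝ)+1)⁻¹ t) with hb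
  have hxpos : ∀ n : ℕ, (0:ℝ) < (n:ℝ)+1 := fun n => by positivity
  have hxipos : ∀ n : ℕ, (0:ℝ) < ((n:ℝ)+1)⁻¹ := fun n => by positivity
  -- the two sequences have the same lintegrals
  have hA : ∀ n, ∫⁻ t, a n t ∂m = ENNReal.ofReal (f ((n:ℝ)+1)) := by
    intro n
    simp only [ha]
    have h := ofReal_integral_eq_lintegral_ofReal (lk_integrable (hxpos n) m)
      (ae_of_all _ (lk_nonneg (hxpos n)))
    rw [← hrep _ (hxpos n)] at h
    exact h.symm
  have hB : ∀ n, ∫⁻ t, b n t ∂m = ENNReal.ofReal (f ((n:ℝ)+1)) := by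
    intro n
    have hint : Integrable (fun t => ((n:ℝ)+1) * loewnerKernel ((n:ℝ)+1)⁻¹ t) m :=
      (lk_integrable (hxipos n) m).const_mul _
    simp only [hb]
    have h := ofReal_integral_eq_lintegral_ofReal hint
      (ae_of_all _ fun t => mul_nonneg (hxpos n).le (lk_nonneg (hxipos n) t))
    rw [integral_const_mul, ← hrep _ (hxipos n), ← hf_symm _ (hxpos n)] at h
    exact h.symm
  -- monotonicity
  have hmonoA : ∀ t, Monotone fun n => a n t := by
    intro t i j hij
    have hij' : (i:ℝ)+1 ≤ (j:ℝ)+1 := by exact_mod_cast by omega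
    simp only [ha]
    apply ENNReal.ofReal_le_ofReal
    unfold loewnerKernel
    split
    · exact hij'
    · have hs : 0 ≤ t.toReal := ENNReal.toReal_nonneg
      rw [div_le_div_iff₀ (by positivity) (by positivity)]
      nlinarith [mul_le_mul_of_nonneg_left (mul_le_mul_of_nonneg_right hij' hs)
        (by positivity : (0:ℝ) ≤ 1 + t.toReal)]
  have hmonoB : ∀ t, Monotone fun n => b n t := by
    intro t i j hij
    have hij' : (i:ℝ)+1 ≤ (j:ℝ)+1 := by exact_mod_cast by omega
    simp only [hb]
    by_cases ht : t = ∞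
    · subst ht
      simp [loewnerKernel, mul_inv_cancel₀ (hxpos i).ne', mul_inv_cancel₀ (hxpos j).ne']
    · rw [lk_inv_eq (hxpos i) ht, lk_inv_eq (hxpos j) ht]
      apply ENNReal.ofReal_le_ofReal
      have hs : 0 ≤ t.toReal := ENNReal.toReal_nonneg
      have hji : ((j:ℝ)+1)⁻¹ ≤ ((i:ℝ)+1)⁻¹ := by
        apply inv_anti₀ (hxpos i) hij'
      have hdj : 0 < ((j:ℝ)+1)⁻¹ + t.toReal := by positivity
      gcongr
  -- pointwise limits
  have hlimA : ∀ t : ℝ≥0∞, Tendsto (fun n => a n t) atTop (𝓝 (1 + t)) := by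
    intro t
    by_cases ht : t = ∞
    · subst ht
      have : (fun n => a n ∞) = fun n : ℕ => ENNReal.ofReal ((n:ℝ)+1) := by
        funext n; simp [ha, loewnerKernel]
      rw [this]
      simpa using tendsto_ofReal_top
    · have hs : 0 ≤ t.toReal := ENNReal.toReal_nonneg
      have h1 : Tendsto (fun n : ℕ => ENNReal.ofReal (((n:ℝ)+1)*(1+t.toReal)/(((n:ℝ)+1)+t.toReal)))
          atTop (𝓝 (ENNReal.ofReal (1+t.toReal))) :=
        (ENNReal.continuous_ofReal.tendsto _).comp (real_tendstoA t.toReal hs)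
      have h2 : ENNReal.ofReal (1+t.toReal) = 1 + t := by
        rw [ENNReal.ofReal_add zero_le_one hs, ENNReal.ofReal_one, ENNReal.ofReal_toReal ht]
      rw [h2] at h1
      refine h1.congr fun n => ?_
      simp [ha, loewnerKernel, if_neg ht]
  have hlimB : ∀ t : ℝ≥0∞, Tendsto (fun n => b n t) atTop (𝓝 (1 + t⁻¹)) := by
    intro t
    by_cases ht : t = ∞
    · subst ht
      have : (fun n => b n ∞) = fun _ : ℕ => (1 : ℝ≥0∞) := by
        funext n
        simp [hb, loewnerKernel, mul_inv_cancel₀ (hxpos n).ne']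
      rw [this]
      simpa using tendsto_const_nhds
    · by_cases ht0 : t = 0
      · subst ht0
        have : (fun n => b n 0) = fun n : ℕ => ENNReal.ofReal ((n:ℝ)+1) := by
          funext n
          simp only [hb]
          rw [lk_inv_eq (hxpos n) (by simp)]
          congr 1
          rw [ENNReal.toReal_zero, add_zero, add_zero, one_div, inv_inv]
        rw [this]
        simpa using tendsto_ofReal_top
      · have hs : 0 < t.toReal := ENNReal.toReal_pos ht0 ht
        have h1 : Tendsto (fun n : ℕ => ENNReal.ofReal ((1+t.toReal)/((((n:ℝ)+1))⁻¹+t.toReal)))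
            atTop (𝓝 (ENNReal.ofReal ((1+t.toReal)/t.toReal))) :=
          (ENNReal.continuous_ofReal.tendsto _).comp (real_tendstoB t.toReal hs)
        have h2 : ENNReal.ofReal ((1+t.toReal)/t.toReal) = 1 + t⁻¹ := by
          have : (1+t.toReal)/t.toReal = 1 + (t.toReal)⁻¹ := by
            field_simp
            ring
          rw [this, ENNReal.ofReal_add zero_le_one (by positivity), ENNReal.ofReal_one,
            ← ENNReal.toReal_inv, ENNReal.ofReal_toReal (ENNReal.inv_ne_top.mpr ht0)]
        rw [h2] at h1
        refine h1.congr fun n => ?_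
        simp only [hb]
        rw [lk_inv_eq (hxpos n) ht]
  -- monotone convergence
  have hmeasA : ∀ n, AEMeasurable (a n) m := fun n =>
    ((lk_meas _).ennreal_ofReal).aemeasurable
  have hmeasB : ∀ n, AEMeasurable (b n) m := fun n =>
    (((lk_meas _).const_mul _).ennreal_ofReal).aemeasurable
  have hA' : Tendsto (fun n => ∫⁻ t, a n t ∂m) atTop (𝓝 (∫⁻ t, (1 + t) ∂m)) :=
    lintegral_tendsto_of_tendsto_of_monotone hmeasA (ae_of_all _ hmonoA) (ae_of_all _ hlimA)
  have hB' : Tendsto (fun n => ∫⁻ t, b n t ∂m) atTop (𝓝 (∫⁻ t, (1 + t⁻¹) ∂m)) :=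
    lintegral_tendsto_of_tendsto_of_monotone hmeasB (ae_of_all _ hmonoB) (ae_of_all _ hlimB)
  have heq : (fun n => ∫⁻ t, a n t ∂m) = fun n => ∫⁻ t, b n t ∂m := by
    funext n; rw [hA n, hB n]
  rw [heq] at hA'
  have hkey : (∫⁻ t, (1 + t) ∂m) = ∫⁻ t, (1 + t⁻¹) ∂m := tendsto_nhds_unique hA' hB'
  rw [lintegral_add_left measurable_const, lintegral_add_left measurable_const,
    lintegral_one] at hkey
  exact (ENNReal.add_right_inj (measure_ne_top m _)).mp hkey
end

section
/- Let f : (0,∞) → (0,∞) be an operator monotone function with Löwner measure m, and let Δ be any Borel subset of [0,∞]. Then the function f_Δ(x) := ∫_Δ x(1+t)/(x+t) dm(t) (integrand read as x at t = ∞) is finite for every x > 0, extends continuously to [0,∞), and is operator monotone on positive operators: for every complex Hilbert space H and all positive bounded operators A ≤ B on H, f_Δ(A) ≤ f_Δ(B), where f_Δ(A) is given by the continuous functional calculus. -/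
open scoped ENNReal Topology
open Filter MeasureTheory

noncomputable def lq (t : ℝ≥0∞) : ℝ := ((1 + t)⁻¹).toReal

lemma lq_nonneg (t : ℝ≥0∞) : 0 ≤ lq t := ENNReal.toReal_nonneg

lemma lq_le_one (t : ℝ≥0∞) : lq t ≤ 1 := by
  have h : (1 + t)⁻¹ ≤ 1 := by
    simpa using ENNReal.inv_le_inv.mpr (le_add_right le_rfl : (1:ℝ≥0∞) ≤ 1 + t)
  calc lq t ≤ (1 : ℝ≥0∞).toReal := ENNReal.toReal_mono (by simp) h
  _ = 1 := by simp

lemma lq_lt_one {t : ℝ≥0∞} (ht : t ≠ 0) : lq t < 1 := by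
  rcases eq_or_ne t ∞ with rfl | hft
  · simp [lq]
  · have hc : 0 < t.toReal := ENNReal.toReal_pos ht hft
    have : lq t = (1 + t.toReal)⁻¹ := by
      rw [lq, ENNReal.toReal_inv, ENNReal.toReal_add (by simp) hft, ENNReal.toReal_one]
    rw [this]
    rw [inv_lt_one_iff₀]
    right; linarith

lemma continuous_lq : Continuous lq := by
  have h1 : Continuous fun t : ℝ≥0∞ => (1 + t)⁻¹ := continuous_inv.comp (by continuity)
  refine ENNReal.continuousOn_toReal.comp_continuous h1 fun t => ?_
  simp [ENNReal.inv_ne_top]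

lemma loewnerKernel_eq (x : ℝ) (t : ℝ≥0∞) :
    loewnerKernel x t = x / (lq t * x + (1 - lq t)) := by
  rcases eq_or_ne t ∞ with rfl | hft
  · simp [loewnerKernel, lq]
  · have hlq : lq t = (1 + t.toReal)⁻¹ := by
      rw [lq, ENNReal.toReal_inv, ENNReal.toReal_add (by simp) hft, ENNReal.toReal_one]
    have hc : 0 ≤ t.toReal := ENNReal.toReal_nonneg
    have h1c : (0:ℝ) < 1 + t.toReal := by linarith
    rw [loewnerKernel, if_neg hft, hlq]
    have hD : (1 + t.toReal)⁻¹ * x + (1 - (1 + t.toReal)⁻¹) = (x + t.toReal) / (1 + t.toReal) := by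
      field_simp
      ring
    rw [hD, div_div_eq_mul_div, mul_comm x (1 + t.toReal), mul_comm]

lemma loewnerKernel_denom_nonneg {x : ℝ} (hx : 0 ≤ x) (t : ℝ≥0∞) :
    0 ≤ lq t * x + (1 - lq t) := by
  have h1 := lq_nonneg t; have h2 := lq_le_one t
  nlinarith

lemma loewnerKernel_nonneg {x : ℝ} (hx : 0 ≤ x) (t : ℝ≥0∞) : 0 ≤ loewnerKernel x t := by
  rw [loewnerKernel_eq]
  exact div_nonneg hx (loewnerKernel_denom_nonneg hx t)

lemma loewnerKernel_le {x : ℝ} (hx : 0 ≤ x) (t : ℝ≥0∞) : loewnerKernel x t ≤ max x 1 := by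
  rw [loewnerKernel_eq]
  rcases eq_or_lt_of_le (loewnerKernel_denom_nonneg hx t) with hD | hD
  · rw [← hD, div_zero]
    positivity
  · rw [div_le_iff₀ hD]
    have h1 := lq_nonneg t; have h2 := lq_le_one t
    rcases le_total x 1 with h | h
    · rw [max_eq_right h]; nlinarith
    · rw [max_eq_left h]
      nlinarith [mul_nonneg (mul_nonneg (lq_nonneg t) hx) (sub_nonneg.mpr h)]

lemma measurable_loewnerKernel (x : ℝ) : Measurable (fun t => loewnerKernel x t) := by
  simp only [loewnerKernel_eq]
  have hm : Measurable lq := continuous_lq.measurable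
  exact Measurable.div measurable_const ((hm.mul measurable_const).add (measurable_const.sub hm))

lemma integrable_loewnerKernel {x : ℝ} (hx : 0 ≤ x) (m : Measure ℝ≥0∞) [IsFiniteMeasure m]
    (Δ : Set ℝ≥0∞) : Integrable (fun t => loewnerKernel x t) (m.restrict Δ) := by
  refine (integrable_const (max x 1)).mono' ((measurable_loewnerKernel x).aestronglyMeasurable) ?_
  refine Eventually.of_forall fun t => ?_
  rw [Real.norm_eq_abs, abs_of_nonneg (loewnerKernel_nonneg hx t)]
  exact loewnerKernel_le hx t

lemma loewnerKernel_continuousAt {t : ℝ≥0∞} (ht : t ≠ 0) {x₀ : ℝ} (hx₀ : 0 ≤ x₀) :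
    ContinuousAt (fun x => loewnerKernel x t) x₀ := by
  simp only [loewnerKernel_eq]
  have hD : lq t * x₀ + (1 - lq t) ≠ 0 := by
    have h1 := lq_nonneg t; have h2 := lq_lt_one ht
    nlinarith
  exact ContinuousAt.div continuousAt_id (by fun_prop) hD

lemma loewnerKernel_zero_left (t : ℝ≥0∞) : loewnerKernel 0 t = 0 := by
  simp [loewnerKernel_eq]

lemma loewnerKernel_zero_right {x : ℝ} (hx : x ≠ 0) : loewnerKernel x 0 = 1 := by
  have : lq 0 = 1 := by simp [lq]
  rw [loewnerKernel_eq, this]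
  simp [div_self hx]

lemma continuousOn_setIntegral_loewnerKernel (m : Measure ℝ≥0∞) [IsFiniteMeasure m]
    (Δ' : Set ℝ≥0∞) (hΔ'm : MeasurableSet Δ') (hΔ' : ∀ t ∈ Δ', t ≠ 0) :
    ContinuousOn (fun x => ∫ t in Δ', loewnerKernel x t ∂m) (Set.Ici 0) := by
  intro x₀ hx₀
  have hx₀' : (0:ℝ) ≤ x₀ := hx₀
  refine continuousWithinAt_of_dominated (bound := fun _ => max (x₀ + 1) 1) ?_ ?_ ?_ ?_
  · exact Eventually.of_forall fun x =>
      ((measurable_loewnerKernel x).aestronglyMeasurable)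
  · have h1 : ∀ᶠ x in 𝓝[Set.Ici 0] x₀, x ∈ Set.Ici (0:ℝ) := eventually_mem_nhdsWithin
    have h2 : ∀ᶠ x in 𝓝[Set.Ici 0] x₀, x < x₀ + 1 :=
      Filter.Eventually.filter_mono nhdsWithin_le_nhds
        (Filter.Tendsto.eventually_lt_const (by linarith) Filter.tendsto_id)
    filter_upwards [h1, h2] with x hx hx' 
    refine Eventually.of_forall fun t => ?_
    rw [Real.norm_eq_abs, abs_of_nonneg (loewnerKernel_nonneg hx t)]
    exact (loewnerKernel_le hx t).trans (max_le_max (by linarith) le_rfl)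
  · exact integrable_const _
  · filter_upwards [ae_restrict_mem hΔ'm] with t ht
    exact (loewnerKernel_continuousAt (hΔ' t ht) hx₀').continuousWithinAt

lemma setIntegral_loewnerKernel_split (m : Measure ℝ≥0∞) [IsFiniteMeasure m]
    (Δ : Set ℝ≥0∞) (hΔ : MeasurableSet Δ) {x : ℝ} (hx : 0 < x) :
    ∫ t in Δ, loewnerKernel x t ∂m =
      (m (Δ ∩ {0})).toReal + ∫ t in Δ \ {0}, loewnerKernel x t ∂m := by
  have hmeas0 : MeasurableSet (Δ ∩ {0} : Set ℝ≥0∞) := hΔ.inter (measurableSet_singleton 0)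
  have hmeasd : MeasurableSet (Δ \ {0} : Set ℝ≥0∞) := hΔ.diff (measurableSet_singleton 0)
  have hsplit : (Δ ∩ {0}) ∪ (Δ \ {0}) = Δ := Set.inter_union_diff Δ {0}
  have hdisj : Disjoint (Δ ∩ {0} : Set ℝ≥0∞) (Δ \ {0}) :=
    Set.disjoint_of_subset_left Set.inter_subset_right (Set.disjoint_sdiff_right (s := {0}))
  conv_lhs => rw [← hsplit]
  rw [setIntegral_union hdisj hmeasd
    (integrable_loewnerKernel hx.le m _) (integrable_loewnerKernel hx.le m _)]
  congr 1
  have : ∀ᵐ t ∂(m.restrict (Δ ∩ {0})), loewnerKernel x t = 1 := by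
    filter_upwards [ae_restrict_mem hmeas0] with t ht
    have : t = 0 := ht.2
    rw [this, loewnerKernel_zero_right hx.ne']
  rw [integral_congr_ae this, setIntegral_const]
  simp
  rfl

section CStar

variable {A : Type*} [CStarAlgebra A] [PartialOrder A] [StarOrderedRing A]

lemma smul_le_smul_cstar {x y : A} (h : x ≤ y) {d : ℝ} (hd : 0 ≤ d) : d • x ≤ d • y := by
  have hsa : star (algebraMap ℝ A (Real.sqrt d)) = algebraMap ℝ A (Real.sqrt d) := by
    rw [← algebraMap_star_comm, star_trivial]
  have hs := star_left_conjugate_le_conjugate h (algebraMap ℝ A (Real.sqrt d))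
  rw [hsa] at hs
  have key : ∀ z : A, algebraMap ℝ A (Real.sqrt d) * z * algebraMap ℝ A (Real.sqrt d) = d • z := by
    intro z
    simp only [Algebra.algebraMap_eq_smul_one, smul_mul_assoc, mul_smul_comm, smul_smul,
      Real.mul_self_sqrt hd, one_mul, mul_one]
  rwa [key x, key y] at hs

lemma cfc_loewnerKernel_le {t : ℝ≥0∞} (ht : t ≠ 0) {a b : A}
    (ha : 0 ≤ a) (hb : 0 ≤ b) (hab : a ≤ b) :
    cfc (fun x => loewnerKernel x t) a ≤ cfc (fun x => loewnerKernel x t) b := by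
  have ha' : IsSelfAdjoint a := .of_nonneg ha
  have hb' : IsSelfAdjoint b := .of_nonneg hb
  rcases eq_or_ne t ∞ with rfl | hft
  · have : (fun x : ℝ => loewnerKernel x ∞) = fun x : ℝ => x := by
      funext x; simp [loewnerKernel]
    rw [this, cfc_id' ℝ a, cfc_id' ℝ b]
    exact hab
  · set c : ℝ := t.toReal with hc_def
    have hc : 0 < c := ENNReal.toReal_pos ht hft
    -- rewrite cfc of the kernel
    have key : ∀ u : A, 0 ≤ u → cfc (fun x => loewnerKernel x t) u =
        algebraMap ℝ A (1 + c) - (c * (1 + c)) • cfc (fun x : ℝ => (x + c)⁻¹) u := by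
      intro u hu
      have hu' : IsSelfAdjoint u := .of_nonneg hu
      have hsp : ∀ x ∈ spectrum ℝ u, 0 ≤ x := fun x hx => spectrum_nonneg_of_nonneg hu hx
      have hcont : ContinuousOn (fun x : ℝ => (x + c)⁻¹) (spectrum ℝ u) := by
        refine ContinuousOn.inv₀ (by fun_prop) fun x hx => ?_
        have := hsp x hx; positivity
      have h1 : cfc (fun x => loewnerKernel x t) u =
          cfc (fun x : ℝ => (1 + c) - (c * (1 + c)) * (x + c)⁻¹) u := by
        refine cfc_congr fun x hx => ?_
        have hx0 := hsp x hx
        have hxc : (0:ℝ) < x + c := by linarith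
        rw [loewnerKernel, if_neg hft, ← hc_def]
        field_simp
        ring
      rw [h1, cfc_sub (fun _ => 1 + c) (fun x => c * (1 + c) * (x + c)⁻¹) u continuousOn_const (continuousOn_const.mul hcont),
        cfc_const _ _ hu', cfc_const_mul _ _ u hcont]
    rw [key a ha, key b hb]
    refine sub_le_sub_left ?_ _
    refine smul_le_smul_cstar ?_ (by positivity)
    -- inverse antitonicity
    have hspa : ∀ x ∈ spectrum ℝ a, 0 ≤ x := fun x hx => spectrum_nonneg_of_nonneg ha hx
    have hspb : ∀ x ∈ spectrum ℝ b, 0 ≤ x := fun x hx => spectrum_nonneg_of_nonneg hb hx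
    have hne_a : ∀ x ∈ spectrum ℝ a, x + c ≠ 0 := fun x hx => by
      have := hspa x hx; positivity
    have hne_b : ∀ x ∈ spectrum ℝ b, x + c ≠ 0 := fun x hx => by
      have := hspb x hx; positivity
    have hconta : ContinuousOn (fun x : ℝ => x + c) (spectrum ℝ a) := by fun_prop
    have hcontb : ContinuousOn (fun x : ℝ => x + c) (spectrum ℝ b) := by fun_prop
    set U : Aˣ := cfcUnits (fun x : ℝ => x + c) a hne_a hconta ha'
    set V : Aˣ := cfcUnits (fun x : ℝ => x + c) b hne_b hcontb hb'
    have hUnn : (0:A) ≤ U := by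
      refine cfc_nonneg fun x hx => ?_
      have := hspa x hx; positivity
    have hUV : (U : A) ≤ V := by
      show cfc (fun x : ℝ => x + c) a ≤ cfc (fun x : ℝ => x + c) b
      rw [cfc_add_const c _ a (by fun_prop) ha', cfc_add_const c _ b (by fun_prop) hb',
        cfc_id' ℝ a, cfc_id' ℝ b]
      exact add_le_add_left hab _
    have := CStarAlgebra.inv_le_inv hUnn hUV
    rwa [val_inv_cfcUnits (fun x : ℝ => x + c) a hne_a hconta ha',
      val_inv_cfcUnits (fun x : ℝ => x + c) b hne_b hcontb hb'] at this

end CStar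

section Hilbert

variable {H : Type} [NormedAddCommGroup H] [InnerProductSpace ℂ H] [CompleteSpace H]

lemma cfc_setIntegral_loewnerKernel (m : Measure ℝ≥0∞) [IsFiniteMeasure m]
    {Δ' : Set ℝ≥0∞} (hΔ'm : MeasurableSet Δ') (hΔ' : ∀ t ∈ Δ', t ≠ 0)
    (A : H →L[ℂ] H) (hA : 0 ≤ A) :
    Integrable (fun t => cfc (fun x => loewnerKernel x t) A) (m.restrict Δ') ∧
    cfc (fun x => ∫ t in Δ', loewnerKernel x t ∂m) A
      = ∫ t in Δ', cfc (fun x => loewnerKernel x t) A ∂m := by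
  have hA' : IsSelfAdjoint A := .of_nonneg hA
  have hsp : ∀ x ∈ spectrum ℝ A, (0:ℝ) ≤ x := fun x hx => spectrum_nonneg_of_nonneg hA hx
  have hsub : spectrum ℝ A ⊆ Set.Ici (0:ℝ) := fun x hx => hsp x hx
  have hKc : ∀ t : ℝ≥0∞, t ≠ 0 → ContinuousOn (fun x => loewnerKernel x t) (spectrum ℝ A) :=
    fun t ht x hx => (loewnerKernel_continuousAt ht (hsp x hx)).continuousWithinAt
  set sA := spectrum ℝ A with hsA
  let Kfun : ℝ≥0∞ → C(sA, ℝ) := fun t =>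
    if h : t = 0 then 0 else ⟨sA.domRestrict (fun x => loewnerKernel x t), (hKc t h).restrict⟩
  -- continuity of `Kfun` away from 0
  have hKcont : ContinuousOn Kfun {t : ℝ≥0∞ | t ≠ 0} := by
    rw [continuousOn_iff_continuous_restrict]
    apply ContinuousMap.continuous_of_continuous_uncurry
    have huncurry : (Function.uncurry fun (t : {t : ℝ≥0∞ | t ≠ 0}) (x : sA) =>
        ({t : ℝ≥0∞ | t ≠ 0}.domRestrict Kfun t) x)
        = fun p : {t : ℝ≥0∞ | t ≠ 0} × sA =>
            (p.2 : ℝ) / (lq p.1 * (p.2 : ℝ) + (1 - lq (p.1 : ℝ≥0∞))) := by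
      funext p
      simp only [Function.uncurry, Set.domRestrict_apply, Kfun, dif_neg p.1.2]
      exact loewnerKernel_eq _ _
    rw [huncurry]
    have hlq1 : Continuous fun p : {t : ℝ≥0∞ | t ≠ 0} × sA => lq (p.1 : ℝ≥0∞) :=
      continuous_lq.comp (continuous_subtype_val.comp continuous_fst)
    have hx2 : Continuous fun p : {t : ℝ≥0∞ | t ≠ 0} × sA => (p.2 : ℝ) :=
      continuous_subtype_val.comp continuous_snd
    refine Continuous.div hx2 ((hlq1.mul hx2).add (continuous_const.sub hlq1)) fun p => ?_
    have h1 := lq_lt_one p.1.2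
    have h2 := lq_nonneg (p.1 : ℝ≥0∞)
    have hx := hsp _ p.2.2
    nlinarith
  have hmeas_ne : MeasurableSet {t : ℝ≥0∞ | t ≠ 0} := (measurableSet_singleton 0).compl
  have hKmeas : AEStronglyMeasurable Kfun (m.restrict Δ') :=
    (hKcont.aestronglyMeasurable hmeas_ne).mono_measure
      (Measure.restrict_mono (fun t ht => hΔ' t ht) le_rfl)
  have hKint : Integrable Kfun (m.restrict Δ') := by
    refine (integrable_const (max (‖A‖ * ‖(1 : H →L[ℂ] H)‖) 1)).mono'
      hKmeas (Eventually.of_forall fun t => ?_)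
    rcases eq_or_ne t 0 with rfl | ht
    · simp only [Kfun, dif_pos rfl, norm_zero]
      positivity
    · rw [show Kfun t = ⟨sA.domRestrict (fun x => loewnerKernel x t), (hKc t ht).restrict⟩
        from dif_neg ht]
      refine (ContinuousMap.norm_le _ (by positivity)).mpr fun x => ?_
      simp only [ContinuousMap.coe_mk, Set.domRestrict_apply]
      rw [Real.norm_eq_abs, abs_of_nonneg (loewnerKernel_nonneg (hsp _ x.2) t)]
      refine (loewnerKernel_le (hsp _ x.2) t).trans (max_le_max ?_ le_rfl)
      calc (x:ℝ) ≤ |(x:ℝ)| := le_abs_self _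
        _ ≤ ‖A‖ * ‖(1 : H →L[ℂ] H)‖ := by
            simpa [Real.norm_eq_abs] using spectrum.norm_le_norm_mul_of_mem x.2
  -- the continuous map given by restriction of the integral equals the Bochner integral
  have hg'cont : ContinuousOn (fun x => ∫ t in Δ', loewnerKernel x t ∂m) sA :=
    (continuousOn_setIntegral_loewnerKernel m Δ' hΔ'm hΔ').mono hsub
  have hGA : (⟨sA.domRestrict (fun x => ∫ t in Δ', loewnerKernel x t ∂m), hg'cont.restrict⟩ :
      C(sA, ℝ)) = ∫ t in Δ', Kfun t ∂m := by
    ext x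
    have h1 : ∫ t in Δ', (ContinuousMap.evalCLM ℝ x) (Kfun t) ∂m
        = (ContinuousMap.evalCLM ℝ x) (∫ t in Δ', Kfun t ∂m) :=
      (ContinuousMap.evalCLM ℝ x).integral_comp_comm hKint
    have h2 : ∫ t in Δ', loewnerKernel (x : ℝ) t ∂m
        = ∫ t in Δ', (ContinuousMap.evalCLM ℝ x) (Kfun t) ∂m := by
      refine integral_congr_ae ?_
      filter_upwards [ae_restrict_mem hΔ'm] with t ht
      simp only [Kfun, dif_neg (hΔ' t ht)]
      rfl
    show (∫ t in Δ', loewnerKernel (x : ℝ) t ∂m) = (∫ t in Δ', Kfun t ∂m) x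
    rw [h2, h1]
    rfl
  -- pass through the continuous linear map given by the cfc homomorphism
  let L : C(sA, ℝ) →L[ℝ] (H →L[ℂ] H) :=
    { toLinearMap := ((cfcHom hA' (R := ℝ)).toAlgHom).toLinearMap
      cont := cfcHom_continuous hA' }
  have hLdef : ∀ fc : C(sA, ℝ), L fc = cfcHom hA' fc := fun _ => rfl
  have haeeq : ∀ᵐ t ∂(m.restrict Δ'), L (Kfun t) = cfc (fun x => loewnerKernel x t) A := by
    filter_upwards [ae_restrict_mem hΔ'm] with t ht
    rw [hLdef, show Kfun t = ⟨sA.domRestrict (fun x => loewnerKernel x t), (hKc t (hΔ' t ht)).restrict⟩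
      from dif_neg (hΔ' t ht), ← cfc_apply (fun x => loewnerKernel x t) A hA' (hKc t (hΔ' t ht))]
  refine ⟨(L.integrable_comp hKint).congr haeeq, ?_⟩
  rw [cfc_apply (fun x => ∫ t in Δ', loewnerKernel x t ∂m) A hA' hg'cont]
  have : (⟨_, hg'cont.restrict⟩ : C(sA, ℝ)) = ∫ t in Δ', Kfun t ∂m := hGA
  rw [this, ← hLdef, ← L.integral_comp_comm hKint]
  exact integral_congr_ae haeeq

end Hilbert

section Hilbert2

variable {H : Type} [NormedAddCommGroup H] [InnerProductSpace ℂ H] [CompleteSpace H]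

lemma integral_nonneg_op {μ : Measure ℝ≥0∞} {D : ℝ≥0∞ → (H →L[ℂ] H)}
    (hint : Integrable D μ) (hpos : ∀ᵐ t ∂μ, 0 ≤ D t) :
    0 ≤ ∫ t, D t ∂μ := by
  rw [ContinuousLinearMap.nonneg_iff_isPositive]
  have hposD : ∀ᵐ t ∂μ, (D t).IsPositive := by
    filter_upwards [hpos] with t ht
    exact (ContinuousLinearMap.nonneg_iff_isPositive (D t)).mp ht
  constructor
  · -- self-adjointness of the integral
    have hstar : star (∫ t, D t ∂μ) = ∫ t, star (D t) ∂μ := by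
      have := ((starL' ℝ : (H →L[ℂ] H) ≃L[ℝ] (H →L[ℂ] H)).toContinuousLinearMap).integral_comp_comm
        hint
      simpa using this.symm
    rw [← ContinuousLinearMap.isSelfAdjoint_iff_isSymmetric]
    show star _ = _
    rw [hstar]
    refine integral_congr_ae ?_
    filter_upwards [hposD] with t ht
    exact ht.isSelfAdjoint
  · intro x
    have hφ : ∀ T : H →L[ℂ] H, T.reApplyInnerSelf x =
        (Complex.reCLM.comp (((innerSL ℂ x).restrictScalars ℝ).comp
          ((ContinuousLinearMap.apply ℂ H x).restrictScalars ℝ))) T := by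
      intro T
      simp only [ContinuousLinearMap.reApplyInnerSelf_apply, ContinuousLinearMap.coe_comp',
        Function.comp_apply, ContinuousLinearMap.coe_restrictScalars',
        ContinuousLinearMap.apply_apply, innerSL_apply_apply, Complex.reCLM_apply]
      exact inner_re_symm (𝕜 := ℂ) (T x) x
    rw [hφ, ← (Complex.reCLM.comp (((innerSL ℂ x).restrictScalars ℝ).comp
          ((ContinuousLinearMap.apply ℂ H x).restrictScalars ℝ))).integral_comp_comm hint]
    refine integral_nonneg_of_ae ?_
    filter_upwards [hposD] with t ht
    rw [← hφ]
    exact ht.2 x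

lemma cfc_setIntegral_loewnerKernel_mono (m : Measure ℝ≥0∞) [IsFiniteMeasure m]
    {Δ' : Set ℝ≥0∞} (hΔ'm : MeasurableSet Δ') (hΔ' : ∀ t ∈ Δ', t ≠ 0)
    (A B : H →L[ℂ] H) (hA : 0 ≤ A) (hB : 0 ≤ B) (hAB : A ≤ B) :
    cfc (fun x => ∫ t in Δ', loewnerKernel x t ∂m) A
      ≤ cfc (fun x => ∫ t in Δ', loewnerKernel x t ∂m) B := by
  obtain ⟨hintA, heqA⟩ := cfc_setIntegral_loewnerKernel m hΔ'm hΔ' A hA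
  obtain ⟨hintB, heqB⟩ := cfc_setIntegral_loewnerKernel m hΔ'm hΔ' B hB
  rw [heqA, heqB, ← sub_nonneg, ← integral_sub hintB hintA]
  refine integral_nonneg_op (hintB.sub hintA) ?_
  filter_upwards [ae_restrict_mem hΔ'm] with t ht
  rw [sub_nonneg]
  exact cfc_loewnerKernel_le (hΔ' t ht) hA hB hAB

end Hilbert2


/-- For an operator monotone `f` with Löwner measure `m` and any Borel set `Δ ⊆ [0,∞]`, the
function `f_Δ(x) = ∫_Δ x(1+t)/(x+t) dm(t)` is finite for every `x > 0`, extends continuously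
to `[0,∞)`, and is operator monotone on positive operators. -/
theorem stmt7 (f : ℝ → ℝ) (hf_pos : ∀ x : ℝ, 0 < x → 0 < f x)
    (hf_mono : IsOperatorMonotone f)
    (m : Measure ℝ≥0∞) [IsFiniteMeasure m]
    (hrep : ∀ x : ℝ, 0 < x → f x = ∫ t, loewnerKernel x t ∂m)
    (Δ : Set ℝ≥0∞) (hΔ : MeasurableSet Δ) :
    (∀ x : ℝ, 0 < x → Integrable (fun t => loewnerKernel x t) (m.restrict Δ)) ∧
    ∃ g : ℝ → ℝ, ContinuousOn g (Set.Ici 0) ∧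
      (∀ x : ℝ, 0 < x → g x = ∫ t in Δ, loewnerKernel x t ∂m) ∧
      ∀ (H : Type) [NormedAddCommGroup H] [InnerProductSpace ℂ H] [CompleteSpace H]
        (A B : H →L[ℂ] H), 0 ≤ A → 0 ≤ B → A ≤ B → cfc g A ≤ cfc g B := by
  refine ⟨fun x hx => integrable_loewnerKernel hx.le m Δ, ?_⟩
  set Δ' : Set ℝ≥0∞ := Δ \ {0} with hΔ'def
  have hΔ'm : MeasurableSet Δ' := hΔ.diff (measurableSet_singleton 0)
  have hΔ'ne : ∀ t ∈ Δ', t ≠ 0 := fun t ht => ht.2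
  set c₀ : ℝ := (m (Δ ∩ {0})).toReal with hc₀def
  set G : ℝ → ℝ := fun x => ∫ t in Δ', loewnerKernel x t ∂m with hGdef
  refine ⟨fun x => c₀ + G x, ?_, ?_, ?_⟩
  · exact continuousOn_const.add (continuousOn_setIntegral_loewnerKernel m Δ' hΔ'm hΔ'ne)
  · intro x hx
    rw [setIntegral_loewnerKernel_split m Δ hΔ hx]
  · intro H _ _ _ A B hA hB hAB
    have h1 : ∀ (T : H →L[ℂ] H), 0 ≤ T →
        cfc (fun x => c₀ + G x) T = algebraMap ℝ (H →L[ℂ] H) c₀ + cfc G T := by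
      intro T hT
      have hT' : IsSelfAdjoint T := .of_nonneg hT
      have hGc : ContinuousOn G (spectrum ℝ T) :=
        (continuousOn_setIntegral_loewnerKernel m Δ' hΔ'm hΔ'ne).mono
          (fun x hx => spectrum_nonneg_of_nonneg hT hx)
      exact cfc_const_add c₀ G T hGc hT'
    rw [h1 A hA, h1 B hB]
    exact add_le_add_right (cfc_setIntegral_loewnerKernel_mono m hΔ'm hΔ'ne A B hA hB hAB) _
end

section
/- Let H be a complex Hilbert space and let f : (0,∞) → (0,∞) be an operator monotone function with Löwner measure m. Then for every positive invertible A ∈ B(H), the Bochner integral ∫_{[0,∞]} (1+t)·A(tI + A)⁻¹ dm(t) (integrand read as A at t = ∞) equals f(A), where f(A) is given by the continuous functional calculus. -/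
open scoped ENNReal Topology
open Filter MeasureTheory

set_option maxHeartbeats 1000000 in
/-- For an operator monotone `f` with Löwner measure `m` and a positive invertible `A`, the
Bochner integral `∫_{[0,∞]} (1+t)·A(tI+A)⁻¹ dm(t)` (integrand read as `A` at `t = ∞`) equals
`f(A)`. -/
theorem stmt16 (H : Type) [NormedAddCommGroup H] [InnerProductSpace ℂ H] [CompleteSpace H]
    (f : ℝ → ℝ) (hf_pos : ∀ x : ℝ, 0 < x → 0 < f x)
    (hf_mono : IsOperatorMonotone f)
    (m : Measure ℝ≥0∞) [IsFiniteMeasure m]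
    (hrep : ∀ x : ℝ, 0 < x → f x = ∫ t, loewnerKernel x t ∂m)
    (A : H →L[ℂ] H) (hA : 0 ≤ A) (hAu : IsUnit A) :
    ∫ t, (if t = ∞ then A
      else (1 + t.toReal) • (A * Ring.inverse (t.toReal • (1 : H →L[ℂ] H) + A))) ∂m
      = cfc f A := by
  have hsa : IsSelfAdjoint A := hA.isSelfAdjoint
  have hspec : ∀ x ∈ spectrum ℝ A, (0:ℝ) < x := by
    intro x hx
    refine lt_of_le_of_ne (spectrum_nonneg_of_nonneg hA hx) ?_
    rintro rfl
    exact spectrum.zero_notMem ℝ hAu hx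
  -- the reparametrizing function u
  set u : ℝ≥0∞ → ℝ := fun t => ((1 + t)⁻¹).toReal with hu_def
  have hu_cont : Continuous u := by
    rw [continuous_iff_continuousAt]
    intro t
    exact (ENNReal.tendsto_toReal (by simp)).comp
      ((continuous_const.add continuous_id).inv (f := fun t : ℝ≥0∞ => 1 + t)).continuousAt
  have hu0 : ∀ t, 0 ≤ u t := fun t => ENNReal.toReal_nonneg
  have hu1 : ∀ t, u t ≤ 1 := by
    intro t
    calc u t ≤ (1 : ℝ≥0∞).toReal := ENNReal.toReal_mono (by simp) (ENNReal.inv_le_one.2 le_self_add)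
      _ = 1 := ENNReal.toReal_one
  have hden : ∀ (v x : ℝ), 0 ≤ v → v ≤ 1 → 0 < x → 0 < 1 - v + v * x := by
    intro v x hv hv1 hx
    rcases le_total x 1 with h | h
    · nlinarith [mul_nonneg (sub_nonneg.2 hv1) (sub_nonneg.2 h)]
    · nlinarith [mul_nonneg hv (sub_nonneg.2 h)]
  have hu_key : ∀ (x : ℝ), 0 < x → ∀ t, loewnerKernel x t = x / (1 - u t + u t * x) := by
    intro x hx t
    by_cases ht : t = ∞
    · subst ht; simp [loewnerKernel, hu_def]
    · have h1 : u t = (1 + t.toReal)⁻¹ := by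
        have h0 : u t = ((1 + t).toReal)⁻¹ := ENNReal.toReal_inv _
        rw [h0, ENNReal.toReal_add (by simp) ht, ENNReal.toReal_one]
      have hc0 : (0:ℝ) ≤ t.toReal := ENNReal.toReal_nonneg
      rw [loewnerKernel, if_neg ht, h1]
      have h2 : (0:ℝ) < 1 + t.toReal := by linarith
      have h3 : (0:ℝ) < x + t.toReal := by linarith
      have h4 : x + t.toReal ≠ 0 := h3.ne'
      field_simp
      ring_nf
      rw [← add_mul, mul_inv_cancel₀ h4]
  -- the continuous-map-valued family
  let kmap : C(ℝ≥0∞ × spectrum ℝ A, ℝ) :=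
    ⟨fun p => (p.2 : ℝ) / (1 - u p.1 + u p.1 * (p.2 : ℝ)), by
      refine Continuous.div (continuous_subtype_val.comp continuous_snd) ?_ ?_
      · exact (continuous_const.sub (hu_cont.comp continuous_fst)).add
          ((hu_cont.comp continuous_fst).mul (continuous_subtype_val.comp continuous_snd))
      · exact fun p => (hden _ _ (hu0 _) (hu1 _) (hspec _ p.2.2)).ne'⟩
  let G : C(ℝ≥0∞, C(spectrum ℝ A, ℝ)) := kmap.curry
  have hGint : Integrable (fun t => G t) m := by
    refine ⟨(map_continuous G).aestronglyMeasurable, ?_⟩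
    exact (HasFiniteIntegral.of_bounded (C := ‖G‖)
      (Eventually.of_forall fun t => G.norm_coe_le_norm t))
  -- the cfcHom as a continuous linear map
  let Φ : C(spectrum ℝ A, ℝ) →L[ℝ] (H →L[ℂ] H) :=
    { toFun := cfcHom hsa (R := ℝ),
      map_add' := fun x y => map_add _ x y,
      map_smul' := fun c x => map_smul (cfcHom hsa (R := ℝ)) c x,
      cont := (cfcHom_isClosedEmbedding hsa).continuous }
  -- Φ (G t) is the cfc of the kernel
  have hΦG : ∀ t, Φ (G t) = cfc (fun x => loewnerKernel x t) A := by
    intro t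
    have hcont : ContinuousOn (fun x : ℝ => x / (1 - u t + u t * x)) (spectrum ℝ A) := by
      refine ContinuousOn.div continuousOn_id (by fun_prop) ?_
      exact fun x hx => (hden _ _ (hu0 _) (hu1 _) (hspec _ hx)).ne'
    have h1 : Φ (G t) = cfc (fun x : ℝ => x / (1 - u t + u t * x)) A := by
      rw [cfc_apply (fun x : ℝ => x / (1 - u t + u t * x)) A hsa hcont]
      exact congrArg (cfcHom hsa) (by ext x; rfl)
    rw [h1]
    exact cfc_congr fun x hx => (hu_key x (hspec x hx) t).symm
  -- the operator identity
  have hop : ∀ t, cfc (fun x => loewnerKernel x t) A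
      = (if t = ∞ then A
        else (1 + t.toReal) • (A * Ring.inverse (t.toReal • (1 : H →L[ℂ] H) + A))) := by
    intro t
    by_cases ht : t = ∞
    · subst ht
      rw [if_pos rfl]
      calc cfc (fun x => loewnerKernel x ∞) A = cfc (fun x : ℝ => x) A := by
            refine cfc_congr fun x _ => ?_
            simp [loewnerKernel]
        _ = A := cfc_id' ℝ A
    · rw [if_neg ht]
      set c := t.toReal with hc
      have hc0 : (0:ℝ) ≤ c := ENNReal.toReal_nonneg
      have hkeq : (spectrum ℝ A).EqOn (fun x => loewnerKernel x t)
          (fun x => x * (1 + c) / (x + c)) := fun x hx => by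
        simp [loewnerKernel, if_neg ht, hc]
      rw [cfc_congr hkeq]
      have hg' : ∀ x ∈ spectrum ℝ A, x + c ≠ 0 := fun x hx => by
        have := hspec x hx; positivity
      have hgc : ContinuousOn (fun x : ℝ => x + c) (spectrum ℝ A) := by fun_prop
      have hfc : ContinuousOn (fun x : ℝ => x * (1 + c)) (spectrum ℝ A) := by fun_prop
      rw [cfc_map_div (fun x : ℝ => x * (1 + c)) (fun x : ℝ => x + c) A hg' hfc hgc hsa]
      have h2 : cfc (fun x : ℝ => x * (1 + c)) A = (1 + c) • A := by
        rw [show (fun x : ℝ => x * (1 + c)) = (fun x : ℝ => (1 + c) * x) by ext x; ring]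
        rw [cfc_const_mul (1 + c) (fun x : ℝ => x) A (by fun_prop), cfc_id' ℝ A]
      have h3 : cfc (fun x : ℝ => x + c) A = c • (1 : H →L[ℂ] H) + A := by
        rw [cfc_add_const c (fun x : ℝ => x) A (by fun_prop) hsa, cfc_id' ℝ A,
          Algebra.algebraMap_eq_smul_one, add_comm]
      rw [h2, h3, smul_mul_assoc]
  -- evaluate the C(K)-valued integral
  set F : C(spectrum ℝ A, ℝ) := ∫ t, G t ∂m with hF_def
  have hFx : ∀ x : spectrum ℝ A, F x = f x := by
    intro x
    let ev : C(spectrum ℝ A, ℝ) →L[ℝ] ℝ :=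
      { toFun := fun g => g x,
        map_add' := fun g h => rfl,
        map_smul' := fun c g => rfl,
        cont := continuous_eval_const x }
    have hev := ev.integral_comp_comm hGint
    have hGx : ∀ t, ev (G t) = loewnerKernel (x : ℝ) t := by
      intro t
      have h0 : ev (G t) = (x : ℝ) / (1 - u t + u t * (x : ℝ)) := rfl
      rw [h0, ← hu_key _ (hspec _ x.2) t]
    have hFev : F x = ∫ t, loewnerKernel (x : ℝ) t ∂m := by
      rw [show F x = ev F from rfl, hF_def, ← hev]
      exact integral_congr_ae (Eventually.of_forall fun t => hGx t)
    rw [hFev, ← hrep _ (hspec _ x.2)]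
  have hf_contOn : ContinuousOn f (spectrum ℝ A) := by
    rw [continuousOn_iff_continuous_restrict]
    have : (spectrum ℝ A).domRestrict f = ⇑F := funext fun x => (hFx x).symm
    rw [this]
    exact F.continuous
  -- put everything together
  calc ∫ t, (if t = ∞ then A
        else (1 + t.toReal) • (A * Ring.inverse (t.toReal • (1 : H →L[ℂ] H) + A))) ∂m
      = ∫ t, Φ (G t) ∂m := by
        refine integral_congr_ae (Eventually.of_forall fun t => ?_)
        simp only [hΦG, hop]
    _ = Φ F := Φ.integral_comp_comm hGint
    _ = cfc f A := by
        rw [cfc_apply f A hsa hf_contOn]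
        exact congrArg (cfcHom hsa) (ContinuousMap.ext fun x => hFx x)
end
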